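/- Let N ≥ 1 and let C ⊆ ℂ^N be a nonempty bounded open balanced set, i.e., λ·z ∈ C whenever z ∈ C and λ ∈ ℂ with |λ| ≤ 1. Then sup{ |f(0)|² : f : ℂ^N → ℂ holomorphic on C with ∫_C |f|² dV ≤ 1 } = 1/vol(C), where dV and vol denote Lebesgue measure on ℂ^N ≅ ℝ^{2N}. -/

import Mathlib

/-!
For `z ∈ C` the whole disc `{λ • z : ‖λ‖ ≤ 1}` lies in `C`, so the mean value property of the
holomorphic function `λ ↦ f (λ • z) ^ 2` gives `2π ‖f 0‖² ≤ ∫₀^{2π} ‖f (e^{iθ} • z)‖² dθ`.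
Integrating over `z ∈ C`, swapping the integrals, and using that each rotation `z ↦ e^{iθ} • z`
preserves both `C` and Lebesgue measure yields `‖f 0‖² vol C ≤ ∫_C ‖f‖²`. Equality is attained by
constants.
-/

open MeasureTheory Real Metric Set

theorem enorm_two_pi_mul_le_lintegral_enorm_circleMap {E : Type*} [NormedAddCommGroup E]
    [NormedSpace ℂ E] [CompleteSpace E] {g : ℂ → E} {c : ℂ} {R : ℝ}
    (hg : DiffContOnCl ℂ g (ball c |R|)) :
    ENNReal.ofReal (2 * π) * ‖g c‖ₑ ≤ ∫⁻ θ in Ioc 0 (2 * π), ‖g (circleMap c R θ)‖ₑ := by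
  have hmean : ∫ θ in 0..2 * π, g (circleMap c R θ) = (2 * π) • g c := by
    rw [← hg.circleAverage, circleAverage_def, smul_inv_smul₀ two_pi_pos.ne']
  calc ENNReal.ofReal (2 * π) * ‖g c‖ₑ = ‖∫ θ in 0..2 * π, g (circleMap c R θ)‖ₑ := by
        rw [hmean, enorm_smul, enorm_of_nonneg two_pi_pos.le]
    _ ≤ _ := by
        rw [intervalIntegral.integral_of_le two_pi_pos.le]
        exact enorm_integral_le_lintegral_enorm _

theorem measurePreserving_smul_of_norm_eq_one {ι : Type*} [Fintype ι] {c : ℂ} (hc : ‖c‖ = 1) :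
    MeasurePreserving (c • · : (ι → ℂ) → ι → ℂ) := by
  have hrot : MeasurePreserving (c * · : ℂ → ℂ) :=
    (rotation (⟨c, by simp [Submonoid.unitSphere, hc]⟩ : Circle)).measurePreserving
  exact measurePreserving_pi (fun _ : ι => volume) (fun _ => volume) fun _ => hrot

theorem Balanced.setLIntegral_comp_smul {ι : Type*} [Fintype ι] {C : Set (ι → ℂ)}
    (hC : Balanced ℂ C) (g : (ι → ℂ) → ENNReal) {c : ℂ} (hc : ‖c‖ = 1) :
    ∫⁻ z in C, g (c • z) = ∫⁻ z in C, g z := by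
  have hc0 : c ≠ 0 := by rintro rfl; simp at hc
  have hemb : MeasurableEmbedding (c • · : (ι → ℂ) → ι → ℂ) :=
    (Homeomorph.smulOfNeZero c hc0).isClosedEmbedding.measurableEmbedding
  rw [(measurePreserving_smul_of_norm_eq_one hc).setLIntegral_comp_emb hemb, image_smul,
    hC.smul_eq hc]

theorem Balanced.two_pi_mul_enorm_sq_le_lintegral_circleMap_smul {E : Type*}
    [NormedAddCommGroup E] [NormedSpace ℂ E] {C : Set E} (hC : Balanced ℂ C) {f : E → ℂ}
    (hf : DifferentiableOn ℂ f C) {z : E} (hz : z ∈ C) :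
    ENNReal.ofReal (2 * π) * ‖f 0‖ₑ ^ 2 ≤
      ∫⁻ θ in Ioc 0 (2 * π), ‖f (circleMap 0 1 θ • z)‖ₑ ^ 2 := by
  have hdisc : MapsTo (· • z) (closedBall (0 : ℂ) 1) C := fun l hl =>
    balanced_iff_smul_mem.mp hC (by simpa using hl) hz
  have hg : DifferentiableOn ℂ (fun l : ℂ => f (l • z) ^ 2) (closedBall 0 1) :=
    (hf.comp (differentiable_id.smul_const z).differentiableOn hdisc).pow 2
  simpa only [zero_smul, enorm_pow] using enorm_two_pi_mul_le_lintegral_enorm_circleMap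
    (hg.diffContOnCl_ball (c := 0) (R := |1|) (by rw [abs_one]))

theorem Balanced.enorm_sq_mul_volume_le_setLIntegral {ι : Type*} [Fintype ι]
    {C : Set (ι → ℂ)} (hC : Balanced ℂ C) (hCm : MeasurableSet C) {f : (ι → ℂ) → ℂ}
    (hf : DifferentiableOn ℂ f C) :
    ‖f 0‖ₑ ^ 2 * volume C ≤ ∫⁻ z in C, ‖f z‖ₑ ^ 2 := by
  have hcirc : ∀ θ : ℝ, ‖circleMap 0 1 θ‖ = 1 := by simp
  have hmeas : AEMeasurable (Function.uncurry fun z θ => ‖f (circleMap 0 1 θ • z)‖ₑ ^ 2)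
      ((volume.restrict C).prod (volume.restrict (Ioc 0 (2 * π)))) := by
    rw [Measure.prod_restrict]
    refine (ContinuousOn.aemeasurable ?_ (hCm.prod measurableSet_Ioc)).enorm.pow_const 2
    refine hf.continuousOn.comp (by fun_prop) fun p hp => ?_
    exact balanced_iff_smul_mem.mp hC (hcirc p.2).le hp.1
  rw [← ENNReal.mul_le_mul_iff_right (ENNReal.ofReal_pos.mpr two_pi_pos).ne' ENNReal.ofReal_ne_top]
  calc ENNReal.ofReal (2 * π) * (‖f 0‖ₑ ^ 2 * volume C)
      = ∫⁻ _ in C, ENNReal.ofReal (2 * π) * ‖f 0‖ₑ ^ 2 := by rw [setLIntegral_const, mul_assoc]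
    _ ≤ ∫⁻ z in C, ∫⁻ θ in Ioc 0 (2 * π), ‖f (circleMap 0 1 θ • z)‖ₑ ^ 2 :=
        setLIntegral_mono' hCm fun z hz => hC.two_pi_mul_enorm_sq_le_lintegral_circleMap_smul hf hz
    _ = ∫⁻ θ in Ioc 0 (2 * π), ∫⁻ z in C, ‖f (circleMap 0 1 θ • z)‖ₑ ^ 2 :=
        lintegral_lintegral_swap hmeas
    _ = ∫⁻ _ in Ioc 0 (2 * π), ∫⁻ z in C, ‖f z‖ₑ ^ 2 :=
        lintegral_congr fun θ => hC.setLIntegral_comp_smul (fun w => ‖f w‖ₑ ^ 2) (hcirc θ)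
    _ = ENNReal.ofReal (2 * π) * ∫⁻ z in C, ‖f z‖ₑ ^ 2 := by
        rw [setLIntegral_const, volume_Ioc, sub_zero, mul_comm]

theorem bergman_kernel_at_zero_of_balanced_general
    (N : ℕ) (C : Set (Fin N → ℂ))
    (hCne : C.Nonempty) (hCb : Bornology.IsBounded C) (hCo : IsOpen C)
    (hCbal : ∀ z ∈ C, ∀ l : ℂ, ‖l‖ ≤ 1 → l • z ∈ C) :
    sSup {x : ℝ | ∃ f : (Fin N → ℂ) → ℂ, DifferentiableOn ℂ f C ∧
        (∫⁻ z in C, (‖f z‖₊ : ENNReal) ^ 2 ∂volume) ≤ 1 ∧ x = ‖f 0‖ ^ 2}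
      = 1 / (volume C).toReal := by
  have hC : Balanced ℂ C := balanced_iff_smul_mem.mpr fun l hl z hz => hCbal z hz l hl
  have hvol_ne_zero : volume C ≠ 0 := (hCo.measure_pos volume hCne).ne'
  have hvol_ne_top : volume C ≠ ⊤ := hCb.measure_lt_top.ne
  have hvol : 0 < (volume C).toReal := ENNReal.toReal_pos hvol_ne_zero hvol_ne_top
  have hc : ‖((√(1 / (volume C).toReal) : ℝ) : ℂ)‖ ^ 2 = 1 / (volume C).toReal := by
    simp [hvol.le]
  refine IsGreatest.csSup_eq ⟨⟨fun _ => _, differentiableOn_const _, ?_, hc.symm⟩, ?_⟩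
  · rw [setLIntegral_const, ← enorm_eq_nnnorm, ← ofReal_norm, ← ENNReal.ofReal_pow (norm_nonneg _),
      hc, one_div, ← ENNReal.toReal_inv, ENNReal.ofReal_toReal (ENNReal.inv_ne_top.2 hvol_ne_zero),
      ENNReal.inv_mul_cancel hvol_ne_zero hvol_ne_top]
  · rintro _ ⟨f, hf, hf_int, rfl⟩
    have h := ENNReal.toReal_mono ENNReal.one_ne_top
      ((hC.enorm_sq_mul_volume_le_setLIntegral hCo.measurableSet hf).trans hf_int)
    rw [le_div_iff₀ hvol]
    simpa [ENNReal.toReal_mul] using h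

/-- The Bergman kernel function of a bounded balanced domain at the origin equals
the reciprocal of the volume of the domain. -/
theorem bergman_kernel_at_zero_of_balanced
    (N : ℕ) (hN : 1 ≤ N) (C : Set (Fin N → ℂ))
    (hCne : C.Nonempty) (hCb : Bornology.IsBounded C) (hCo : IsOpen C)
    (hCbal : ∀ z ∈ C, ∀ l : ℂ, ‖l‖ ≤ 1 → l • z ∈ C) :
    sSup {x : ℝ | ∃ f : (Fin N → ℂ) → ℂ, DifferentiableOn ℂ f C ∧
        (∫⁻ z in C, (‖f z‖₊ : ENNReal) ^ 2 ∂volume) ≤ 1 ∧ x = ‖f 0‖ ^ 2}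
      = 1 / (volume C).toReal :=
  bergman_kernel_at_zero_of_balanced_general N C hCne hCb hCo hCbal
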